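/- For any nonzero vector v ∈ 𝔽₂^N (N = 2ⁿ) with smallest nonzero coordinate index i, the Hamming weight of v·P_n is at least w(g_i) = 2^{w(i)}, where g_i is row i of P_n. -/

import Mathlib

/-!
Write an index of `P_{n+1} = P ⊗ P_n` as `i = b + 2ⁿ a` with `a ∈ {0, 1}`. Row `i` of `P_{n+1}`
is `(g_b | 0)` if `a = 0` and `(g_b | g_b)` if `a = 1`, and `v P_{n+1} = ((v₀ + v₁) P_n | v₁ P_n)`
for the two halves `v₀, v₁` of `v`. So the row weight doubles exactly when the top binary digit of
`i` is one, and the lower bound follows by induction: if the least index of `v` lies in the first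
half, the triangle inequality gives `wt (v₀ P_n) ≤ wt ((v₀ + v₁) P_n) + wt (v₁ P_n)`; otherwise
`v₀ = 0` and the weight of `v₁ P_n` is counted twice.
-/

open Matrix

/-- The 2×2 polar kernel `P = [[1,0],[1,1]]` over GF(2). -/
def Pmat : Matrix (Fin 2) (Fin 2) (ZMod 2) := !![1, 0; 1, 1]

/-- The polar transform `P_n = P^{⊗n}`, the n-fold Kronecker power of `Pmat`. -/
def polarP : (n : ℕ) → Matrix (Fin (2 ^ n)) (Fin (2 ^ n)) (ZMod 2)
  | 0 => 1
  | n + 1 =>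
    Matrix.reindex (finProdFinEquiv.trans (finCongr (by ring)))
      (finProdFinEquiv.trans (finCongr (by ring)))
      (Matrix.kroneckerMap (· * ·) Pmat (polarP n))

theorem Nat.sum_digits_two_add_two_pow_mul {n b a : ℕ} (hb : b < 2 ^ n) (ha : a < 2) :
    (Nat.digits 2 (b + 2 ^ n * a)).sum = (Nat.digits 2 b).sum + a := by
  obtain rfl | rfl : a = 0 ∨ a = 1 := by omega
  · simp
  · have hlen : (Nat.digits 2 b).length ≤ n := (Nat.digits_length_le_iff one_lt_two b).2 hb
    obtain ⟨k, hk⟩ := Nat.exists_eq_add_of_le hlen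
    rw [hk, ← Nat.digits_append_zeroes_append_digits one_lt_two one_pos]
    simp

section Hamming

variable {ι κ β : Type*} [Fintype ι] [Fintype κ] [DecidableEq β]

theorem hammingNorm_comp_equiv [Zero β] (x : κ → β) (e : ι ≃ κ) :
    hammingNorm (x ∘ e) = hammingNorm x := by
  simp only [hammingNorm]
  exact Finset.card_equiv e (by simp)

theorem hammingNorm_uncurry {α : Type*} [Fintype α] [Zero β] (u : α × ι → β) :
    hammingNorm u = ∑ a, hammingNorm (Function.curry u a) := by
  simp only [hammingNorm, Finset.card_filter]
  exact Fintype.sum_prod_type _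

theorem hammingNorm_le_hammingNorm_add_add [AddZeroClass β] (x y : ι → β) :
    hammingNorm x ≤ hammingNorm (x + y) + hammingNorm y := by
  classical
  refine (Finset.card_le_card fun i hi => ?_).trans (Finset.card_union_le _ _)
  by_contra h
  simp only [Finset.mem_union, Finset.mem_filter, Finset.mem_univ, true_and, not_or,
    not_not, Pi.add_apply] at hi h
  exact hi (by simpa [h.2] using h.1)

theorem hammingNorm_one_row [DecidableEq ι] [MulZeroOneClass β] [Nontrivial β] (i : ι) :
    hammingNorm ((1 : Matrix ι ι β) i) = 1 := by
  rw [hammingNorm, Finset.card_eq_one]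
  exact ⟨i, by ext j; by_cases h : i = j <;> simp [one_apply, h, eq_comm]⟩

end Hamming

section Kronecker

variable {ι κ : Type*} (B : Matrix ι κ (ZMod 2))

theorem hammingNorm_kroneckerMap_Pmat_row [Fintype κ] (a : Fin 2) (b : ι) :
    hammingNorm (kroneckerMap (· * ·) Pmat B (a, b)) = 2 ^ (a : ℕ) * hammingNorm (B b) := by
  have hblock (c : Fin 2) :
      Function.curry (kroneckerMap (· * ·) Pmat B (a, b)) c = Pmat a c • B b :=
    rfl
  rw [hammingNorm_uncurry, Fin.sum_univ_two, hblock, hblock]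
  fin_cases a <;> simp [Pmat, two_mul]

theorem hammingNorm_vecMul_kroneckerMap_Pmat [Fintype ι] [Fintype κ]
    (w : Fin 2 × ι → ZMod 2) :
    hammingNorm (w ᵥ* kroneckerMap (· * ·) Pmat B) =
      hammingNorm ((Function.curry w 0 + Function.curry w 1) ᵥ* B) +
        hammingNorm (Function.curry w 1 ᵥ* B) := by
  rw [hammingNorm_uncurry, Fin.sum_univ_two]
  congr 2 <;> ext d <;>
    simp [vecMul, dotProduct, Fintype.sum_prod_type, Pmat, add_mul, Finset.sum_add_distrib]

end Kronecker

def polarEquiv (n : ℕ) : Fin 2 × Fin (2 ^ n) ≃ Fin (2 ^ (n + 1)) :=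
  finProdFinEquiv.trans (finCongr (by ring))

theorem polarEquiv_val (n : ℕ) (a : Fin 2) (b : Fin (2 ^ n)) :
    (polarEquiv n (a, b) : ℕ) = b + 2 ^ n * a :=
  rfl

theorem polarEquiv_lt_of_fst_lt {n : ℕ} {a a' : Fin 2} (b b' : Fin (2 ^ n)) (h : a' < a) :
    polarEquiv n (a', b') < polarEquiv n (a, b) := by
  rw [Fin.lt_def, polarEquiv_val, polarEquiv_val]
  obtain ⟨rfl, rfl⟩ : a' = 0 ∧ a = 1 := by omega
  simp only [Fin.val_zero, Fin.val_one, mul_zero, add_zero, mul_one]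
  omega

theorem polarEquiv_lt_polarEquiv_iff {n : ℕ} (a : Fin 2) {b b' : Fin (2 ^ n)} :
    polarEquiv n (a, b') < polarEquiv n (a, b) ↔ b' < b := by
  rw [Fin.lt_def, Fin.lt_def, polarEquiv_val, polarEquiv_val]
  omega

theorem polarP_succ (n : ℕ) :
    polarP (n + 1) =
      reindex (polarEquiv n) (polarEquiv n) (kroneckerMap (· * ·) Pmat (polarP n)) :=
  rfl

theorem hammingNorm_polarP_succ_row (n : ℕ) (a : Fin 2) (b : Fin (2 ^ n)) :
    hammingNorm (polarP (n + 1) (polarEquiv n (a, b))) =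
      2 ^ (a : ℕ) * hammingNorm (polarP n b) := by
  have hrow : polarP (n + 1) (polarEquiv n (a, b)) =
      kroneckerMap (· * ·) Pmat (polarP n) (a, b) ∘ (polarEquiv n).symm := by
    ext; simp [polarP_succ]
  rw [hrow, hammingNorm_comp_equiv, hammingNorm_kroneckerMap_Pmat_row]

theorem hammingNorm_polarP_row (n : ℕ) (i : Fin (2 ^ n)) :
    hammingNorm (polarP n i) = 2 ^ (Nat.digits 2 i).sum := by
  induction n with
  | zero =>
    obtain rfl : i = 0 := Fin.ext (by simp)
    exact hammingNorm_one_row _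
  | succ n ih =>
    obtain ⟨⟨a, b⟩, rfl⟩ := (polarEquiv n).surjective i
    rw [hammingNorm_polarP_succ_row, ih, polarEquiv_val,
      Nat.sum_digits_two_add_two_pow_mul b.isLt a.isLt, pow_add, mul_comm]

theorem hammingNorm_vecMul_polarP_succ (n : ℕ) (v : Fin (2 ^ (n + 1)) → ZMod 2) :
    hammingNorm (v ᵥ* polarP (n + 1)) =
      hammingNorm ((Function.curry (v ∘ polarEquiv n) 0 + Function.curry (v ∘ polarEquiv n) 1)
          ᵥ* polarP n) +
        hammingNorm (Function.curry (v ∘ polarEquiv n) 1 ᵥ* polarP n) := by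
  rw [polarP_succ, reindex_apply, submatrix_vecMul_equiv, hammingNorm_comp_equiv,
    Equiv.symm_symm, hammingNorm_vecMul_kroneckerMap_Pmat]

theorem hammingNorm_polarP_row_le_vecMul (n : ℕ) (v : Fin (2 ^ n) → ZMod 2) (i : Fin (2 ^ n))
    (hvi : v i ≠ 0) (hmin : ∀ j < i, v j = 0) :
    hammingNorm (polarP n i) ≤ hammingNorm (v ᵥ* polarP n) := by
  induction n with
  | zero =>
    rw [show polarP 0 = 1 from rfl, hammingNorm_one_row, vecMul_one, Nat.one_le_iff_ne_zero,
      hammingNorm_ne_zero_iff]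
    exact fun hv => hvi (congrFun hv i)
  | succ n ih =>
    obtain ⟨⟨a, b⟩, rfl⟩ := (polarEquiv n).surjective i
    rw [hammingNorm_vecMul_polarP_succ]
    set w := v ∘ polarEquiv n
    have hmin_block : ∀ d < b, Function.curry w a d = 0 := fun d hd =>
      hmin _ ((polarEquiv_lt_polarEquiv_iff a).2 hd)
    have hrow := ih (Function.curry w a) b hvi hmin_block
    rw [hammingNorm_polarP_succ_row]
    obtain rfl | rfl : a = 0 ∨ a = 1 := by omega
    · calc 2 ^ 0 * hammingNorm (polarP n b)
          ≤ hammingNorm (Function.curry w 0 ᵥ* polarP n) := by simpa using hrow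
        _ ≤ _ := by
          rw [add_vecMul]
          exact hammingNorm_le_hammingNorm_add_add _ _
    · have hlow_zero : Function.curry w 0 = 0 := funext fun d =>
        hmin _ (polarEquiv_lt_of_fst_lt b d Fin.zero_lt_one)
      rw [hlow_zero, zero_add]
      simpa [two_mul] using add_le_add hrow hrow

/-- For a nonzero vector `v` with least nonzero coordinate index `i`, the weight
of `v·P_n` is at least `w(g_i) = 2^{w(i)}`. -/
theorem vecMul_polarP_weight_lower_bound (n : ℕ) (v : Fin (2 ^ n) → ZMod 2)
    (i : Fin (2 ^ n)) (hvi : v i ≠ 0) (hmin : ∀ j : Fin (2 ^ n), j < i → v j = 0) :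
    hammingNorm (polarP n i) ≤ hammingNorm (v ᵥ* polarP n) ∧
    hammingNorm (polarP n i) = 2 ^ ((Nat.digits 2 i.val).sum) :=
  ⟨hammingNorm_polarP_row_le_vecMul n v i hvi hmin, hammingNorm_polarP_row n i⟩
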